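/- Every S-function f on finite simple graphs induces an S-functor F over Graph_mono with F[X] = f(X) for every graph X; that is, f is monotone along injective graph homomorphisms, f(K_n) = n for every n ∈ ℕ, and f(G #_{K_n} H) = max(f(G), f(H)) for all clique sums along complete graphs, so the corresponding assignment is a spinal functor Graph_mono → Nat. -/

import Mathlib

open CategoryTheory

universe u v

/-- The data of a spine and proxy pushout operation on a category. -/
structure SpineData (C : Type u) [Category.{v} C] where
  /-- the spine, a functor from the discrete category ℕ -/
  Ω : ℕ → C
  /-- proxy pushout object of a span out of a spine object -/
  P : ∀ {n : ℕ} {G H : C}, (Ω n ⟶ G) → (Ω n ⟶ H) → C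
  /-- left structure morphism of the proxy pushout cocone -/
  inl : ∀ {n : ℕ} {G H : C} (g : Ω n ⟶ G) (h : Ω n ⟶ H), G ⟶ P g h
  /-- right structure morphism of the proxy pushout cocone -/
  inr : ∀ {n : ℕ} {G H : C} (g : Ω n ⟶ G) (h : Ω n ⟶ H), H ⟶ P g h

variable {C : Type u} [Category.{v} C]

/-- (SC1): every object admits a morphism to some spine object. -/
def SpineData.SC1 (D : SpineData C) : Prop :=
  ∀ X : C, ∃ n : ℕ, Nonempty (X ⟶ D.Ω n)

/-- (SC2): unique compatibility morphisms between proxy pushouts of extended spans. -/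
def SpineData.SC2 (D : SpineData C) : Prop :=
  ∀ {n : ℕ} {G H G' H' : C} (g : D.Ω n ⟶ G) (h : D.Ω n ⟶ H) (g' : G ⟶ G') (h' : H ⟶ H'),
    ∃! m : D.P g h ⟶ D.P (g ≫ g') (h ≫ h'),
      D.inl g h ≫ m = g' ≫ D.inl (g ≫ g') (h ≫ h') ∧
      D.inr g h ≫ m = h' ≫ D.inr (g ≫ g') (h ≫ h')

/-- A spined category is a category equipped with spine data satisfying SC1 and SC2. -/
def SpineData.IsSpined (D : SpineData C) : Prop := D.SC1 ∧ D.SC2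

/-- An S-functor over a spined category `(C, Ω, 𝔓)`: a spinal functor to the spined
category `Nat` (the poset `(ℕ, ≤)` with spine `n ↦ n` and proxy pushouts given by maxima).
Equivalently: a monotone map preserving the spine and proxy pushouts. -/
structure SFunctor (D : SpineData C) where
  val : C → ℕ
  mono : ∀ {X Y : C}, (X ⟶ Y) → val X ≤ val Y
  spine : ∀ n : ℕ, val (D.Ω n) = n
  pp : ∀ {n : ℕ} {G H : C} (g : D.Ω n ⟶ G) (h : D.Ω n ⟶ H),
    val (D.P g h) = max (val G) (val H)

/-- An object is pseudo-chordal if all S-functors agree on it. -/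
def PseudoChordal (D : SpineData C) (X : C) : Prop :=
  ∀ F G : SFunctor D, F.val X = G.val X

/-- The chordal objects: the smallest collection of objects containing the spine and
closed under proxy pushouts. -/
inductive Chordal (D : SpineData C) : C → Prop
  | spine (n : ℕ) : Chordal D (D.Ω n)
  | push {n : ℕ} {A B : C} (a : D.Ω n ⟶ A) (b : D.Ω n ⟶ B) :
      Chordal D A → Chordal D B → Chordal D (D.P a b)

/-- The set of widths of pseudo-chordal completions of `X`: `k` is such a width
iff there is a morphism `X ⟶ H` with `H` pseudo-chordal and every S-functor takes
the value `k` on `H`. -/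
def pcWidths (D : SpineData C) (X : C) : Set ℕ :=
  {k | ∃ H : C, Nonempty (X ⟶ H) ∧ PseudoChordal D H ∧ ∀ F : SFunctor D, F.val H = k}

/-- The set of widths of chordal completions of `X`. -/
def chWidths (D : SpineData C) (X : C) : Set ℕ :=
  {k | ∃ H : C, Nonempty (X ⟶ H) ∧ Chordal D H ∧ ∀ F : SFunctor D, F.val H = k}

/-- The triangulation number: minimum width of a pseudo-chordal completion. -/
noncomputable def tri (D : SpineData C) (X : C) : ℕ := sInf (pcWidths D X)

/-- The chordal triangulation number: minimum width of a chordal completion. -/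
noncomputable def triCh (D : SpineData C) (X : C) : ℕ := sInf (chWidths D X)

/-- The order of an object: least `n` admitting a morphism `X ⟶ Ω n`. -/
noncomputable def ordOf (D : SpineData C) (X : C) : ℕ := sInf {n : ℕ | Nonempty (X ⟶ D.Ω n)}

/-- A finite simple graph: a finite vertex type together with a simple graph on it. -/
structure FinGraph : Type 1 where
  V : Type
  [fin : Finite V]
  G : SimpleGraph V

attribute [instance] FinGraph.fin

namespace Glue

variable {S A B : FinGraph} (g : S.G →g A.G) (h : S.G →g B.G)

/-- The identification relation of the `S`-sum: `inl (g s)` is glued to `inr (h s)`. -/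
def rel : (A.V ⊕ B.V) → (A.V ⊕ B.V) → Prop :=
  fun x y => ∃ s : S.V, x = Sum.inl (g s) ∧ y = Sum.inr (h s)

/-- Vertices of the `S`-sum: the disjoint union with `g s` and `h s` identified. -/
def GV := Quot (rel g h)

instance : Finite (GV g h) :=
  Finite.of_surjective (Quot.mk (rel g h)) fun q => Quot.inductionOn q fun x => ⟨x, rfl⟩

/-- Left injection on vertices. -/
def mkl (a : A.V) : GV g h := Quot.mk _ (Sum.inl a)

/-- Right injection on vertices. -/
def mkr (b : B.V) : GV g h := Quot.mk _ (Sum.inr b)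

/-- Adjacency in the `S`-sum: edges coming from `A` or from `B` (with loops and
parallel edges removed by the quotient and the `x ≠ y` condition). -/
def adj (x y : GV g h) : Prop :=
  x ≠ y ∧ ((∃ a b, A.G.Adj a b ∧ x = mkl g h a ∧ y = mkl g h b) ∨
           (∃ a b, B.G.Adj a b ∧ x = mkr g h a ∧ y = mkr g h b))

/-- The `S`-sum graph `A #_S B`. -/
def graph : SimpleGraph (GV g h) where
  Adj := adj g h
  symm := ⟨by
    rintro x y ⟨hne, hc⟩
    refine ⟨hne.symm, ?_⟩
    rcases hc with ⟨a, b, hab, hx, hy⟩ | ⟨a, b, hab, hx, hy⟩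
    · exact Or.inl ⟨b, a, hab.symm, hy, hx⟩
    · exact Or.inr ⟨b, a, hab.symm, hy, hx⟩⟩
  loopless := ⟨fun x hx => hx.1 rfl⟩

/-- The `S`-sum as a finite graph. -/
def obj : FinGraph := ⟨GV g h, graph g h⟩

open Classical in
/-- Normal form for vertices of the disjoint union modulo gluing. -/
noncomputable def norm : A.V ⊕ B.V → A.V ⊕ B.V
  | .inl a => .inl a
  | .inr b => if hb : ∃ s, h s = b then .inl (g (Classical.choose hb)) else .inr b

lemma norm_rel (hh : Function.Injective h) {x y : A.V ⊕ B.V} (hxy : rel g h x y) :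
    norm g h x = norm g h y := by
  obtain ⟨s, rfl, rfl⟩ := hxy
  have hb : ∃ t : S.V, h t = h s := ⟨s, rfl⟩
  have hc : Classical.choose hb = s := hh (Classical.choose_spec hb)
  simp only [norm, dif_pos hb, hc]

lemma norm_eqvGen (hh : Function.Injective h) {x y : A.V ⊕ B.V}
    (hxy : Relation.EqvGen (rel g h) x y) : norm g h x = norm g h y := by
  induction hxy with
  | rel _ _ hr => exact norm_rel g h hh hr
  | refl => rfl
  | symm _ _ _ ih => exact ih.symm
  | trans _ _ _ _ _ ih₁ ih₂ => exact ih₁.trans ih₂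

lemma mkl_inj (hh : Function.Injective h) : Function.Injective (mkl g h) := by
  intro a a' e
  have := norm_eqvGen g h hh (Quot.eq.1 e)
  simpa [norm] using this

lemma mkr_inj (hg : Function.Injective g) (hh : Function.Injective h) :
    Function.Injective (mkr g h) := by
  intro b b' e
  have hn := norm_eqvGen g h hh (Quot.eq.1 e)
  by_cases hb : ∃ s, h s = b <;> by_cases hb' : ∃ s, h s = b'
  · simp only [norm, dif_pos hb, dif_pos hb'] at hn
    have : Classical.choose hb = Classical.choose hb' := hg (Sum.inl.inj hn)
    rw [← Classical.choose_spec hb, ← Classical.choose_spec hb', this]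
  · simp only [norm, dif_pos hb, dif_neg hb'] at hn
    exact absurd hn (by simp)
  · simp only [norm, dif_neg hb, dif_pos hb'] at hn
    exact absurd hn (by simp)
  · simp only [norm, dif_neg hb, dif_neg hb'] at hn
    exact Sum.inr.inj hn

/-- The inclusion homomorphism `A → A #_S B`. -/
def inlHom (hg : Function.Injective g) (hh : Function.Injective h) :
    A.G →g (obj g h).G where
  toFun := mkl g h
  map_rel' := fun {a b} hab =>
    (⟨fun e => hab.ne (mkl_inj g h hh e), Or.inl ⟨a, b, hab, rfl, rfl⟩⟩ :
      adj g h (mkl g h a) (mkl g h b))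

/-- The inclusion homomorphism `B → A #_S B`. -/
def inrHom (hg : Function.Injective g) (hh : Function.Injective h) :
    B.G →g (obj g h).G where
  toFun := mkr g h
  map_rel' := fun {a b} hab =>
    (⟨fun e => hab.ne (mkr_inj g h hg hh e), Or.inr ⟨a, b, hab, rfl, rfl⟩⟩ :
      adj g h (mkr g h a) (mkr g h b))

lemma inlHom_inj (hg : Function.Injective g) (hh : Function.Injective h) :
    Function.Injective (inlHom g h hg hh) := mkl_inj g h hh

lemma inrHom_inj (hg : Function.Injective g) (hh : Function.Injective h) :
    Function.Injective (inrHom g h hg hh) := mkr_inj g h hg hh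

end Glue

/-- The complete graph `K n` on vertex set `Fin n`. -/
abbrev KG (n : ℕ) : FinGraph := ⟨Fin n, (⊤ : SimpleGraph (Fin n))⟩
/-- `Graph_mono`: the category of finite simple graphs and injective graph
homomorphisms. -/
instance : Category.{0, 1} FinGraph where
  Hom A B := {f : A.G →g B.G // Function.Injective f}
  id A := ⟨SimpleGraph.Hom.id, fun _ _ e => e⟩
  comp f g := ⟨g.1.comp f.1, fun _ _ e => f.2 (g.2 e)⟩

/-- The spine data of `Graph_mono`: spine `n ↦ K n` and proxy pushouts given by
clique sums along complete graphs. -/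
def GraphSpine : SpineData FinGraph where
  Ω n := KG n
  P {_ _ _} g h := Glue.obj g.1 h.1
  inl {_ _ _} g h := ⟨Glue.inlHom g.1 h.1 g.2 h.2, Glue.inlHom_inj g.1 h.1 g.2 h.2⟩
  inr {_ _ _} g h := ⟨Glue.inrHom g.1 h.1 g.2 h.2, Glue.inrHom_inj g.1 h.1 g.2 h.2⟩

/-- `A` is a minor of `B`: there are pairwise disjoint nonempty branch sets in `B`,
each inducing a connected subgraph, one for each vertex of `A`, such that edges of `A`
are witnessed by edges of `B` between the corresponding branch sets. -/
def FinGraph.IsMinor (A B : FinGraph) : Prop :=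
  ∃ Br : A.V → Set B.V,
    (∀ u, (Br u).Nonempty) ∧
    (∀ u, (B.G.induce (Br u)).Connected) ∧
    (∀ u v, u ≠ v → Disjoint (Br u) (Br v)) ∧
    (∀ u v, A.G.Adj u v → ∃ a ∈ Br u, ∃ b ∈ Br v, B.G.Adj a b)

/-- `A ⋆ v`: the graph obtained from `A` by adjoining a new apex vertex adjacent to
every vertex of `A`. -/
def FinGraph.apex (A : FinGraph) : FinGraph where
  V := Option A.V
  fin := Finite.of_equiv _ (Equiv.optionEquivSumPUnit.{0,0} A.V).symm
  G := { Adj := fun x y => match x, y with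
          | some a, some b => A.G.Adj a b
          | some _, none => True
          | none, some _ => True
          | none, none => False
         symm := ⟨by rintro (a | a) (b | b) hab <;> simp_all <;> exact hab.symm⟩
         loopless := ⟨by rintro (a | a) hab <;> simp_all⟩ }

/-! An injective homomorphism exhibits its domain as a minor of its codomain (singleton branch
sets), so (H2) makes `f` monotone along the morphisms of `Graph_mono`. Since `K n ⋆ v ≅ K (n + 1)`,
(H1) and (H3) give `f (K n) = n` by induction, and (H4) is exactly preservation of proxy pushouts. -/

namespace FinGraph

lemma isMinor_of_injective {A B : FinGraph} (φ : A.G →g B.G) (hφ : Function.Injective φ) :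
    A.IsMinor B := by
  refine ⟨fun u => {φ u}, fun u => Set.singleton_nonempty _, fun u => ?_,
    fun u v huv => Set.disjoint_singleton.2 (hφ.ne huv),
    fun u v huv => ⟨φ u, rfl, φ v, rfl, φ.map_rel huv⟩⟩
  rw [SimpleGraph.induce_singleton_eq_top]
  exact SimpleGraph.connected_top

lemma apex_KG_eq_top (n : ℕ) : (KG n).apex.G = (⊤ : SimpleGraph (Option (Fin n))) := by
  ext (a | a) (b | b) <;> simp [apex]

def apexKGIso (n : ℕ) : (KG n).apex.G ≃g (KG (n + 1)).G :=
  apex_KG_eq_top n ▸ SimpleGraph.Iso.completeGraph (finSuccEquiv n).symm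

section MinorMonotone

variable {f : FinGraph → ℕ} (H2 : ∀ {A B : FinGraph}, A.IsMinor B → f A ≤ f B)
include H2

lemma apply_le_of_injective {A B : FinGraph} (φ : A.G →g B.G) (hφ : Function.Injective φ) :
    f A ≤ f B :=
  H2 (isMinor_of_injective φ hφ)

lemma apply_eq_of_iso {A B : FinGraph} (e : A.G ≃g B.G) : f A = f B :=
  le_antisymm (apply_le_of_injective H2 e.toHom e.injective)
    (apply_le_of_injective H2 e.symm.toHom e.symm.injective)

lemma apply_KG_eq (H1 : f (KG 0) = 0) (H3 : ∀ A : FinGraph, f A.apex = 1 + f A) (n : ℕ) :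
    f (KG n) = n := by
  induction n with
  | zero => exact H1
  | succ n ih => rw [← apply_eq_of_iso H2 (apexKGIso n), H3, ih, add_comm]

end MinorMonotone

end FinGraph

/-- every S-function `f` (in the sense of Halin: `f K₀ = 0`, monotone
under minors, adding an apex increases `f` by one, and `f` distributes over clique sums
along complete graphs) gives rise to an S-functor `F` over `Graph_mono` with
`F[X] = f X` for every finite simple graph `X`. -/
theorem SFunction_gives_SFunctor (f : FinGraph → ℕ)
    (H1 : f (KG 0) = 0)
    (H2 : ∀ {A B : FinGraph}, A.IsMinor B → f A ≤ f B)
    (H3 : ∀ A : FinGraph, f A.apex = 1 + f A)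
    (H4 : ∀ {n : ℕ} {A B : FinGraph} (g : KG n ⟶ A) (h : KG n ⟶ B),
      f (GraphSpine.P g h) = max (f A) (f B)) :
    ∃ F : SFunctor GraphSpine, ∀ X : FinGraph, F.val X = f X :=
  ⟨{ val := f
     mono := fun φ => FinGraph.apply_le_of_injective H2 φ.1 φ.2
     spine := FinGraph.apply_KG_eq H2 H1 H3
     pp := H4 }, fun _ => rfl⟩
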